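/- arXiv:2304.08712 — 2 statements merged into one kernel-verified Lean document; each statement's English description precedes it below -/
import Mathlib

section
/- Suppose C is a family of classes with sample complexity functions m_Q : ℕ → ℕ such that {m_Q : Q ∈ C} is cofinal in (ℕ^ℕ, eventual dominance). Then there is no function d : C → ℝ and f : ℝ × ℕ → ℕ with m_Q(k) ≤ f(d(Q), k) for all Q, k, such that f is monotone in its first argument under eventual dominance (i.e. d(Q₁) ≥ d(Q₂) implies f(d(Q₂), ·) ≤_ed f(d(Q₁), ·)). -/
/-!
Monotonicity turns a cofinal family of dimension values into a cofinal family of bounding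
functions `f (d Q)`. Since every set of reals has a countable cofinal subset, this gives countably
many functions eventually dominating every `m Q`, hence every function `ℕ → ℕ`. A diagonal function
eventually dominated by none of them contradicts this.
-/

/-- `g` is eventually dominated by `f`. -/
def EvDom (g f : ℕ → ℕ) : Prop := ∃ N : ℕ, ∀ n ≥ N, g n ≤ f n

open Filter

theorem evDom_iff_eventuallyLE {g f : ℕ → ℕ} : EvDom g f ↔ g ≤ᶠ[atTop] f :=
  eventually_atTop.symm

theorem exists_rat_indexed_cofinal {C α : Type*} [Field α] [LinearOrder α] [IsStrictOrderedRing α]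
    [Archimedean α] [Nonempty C] (d : C → α) : ∃ a : ℚ → C, ∀ P, ∃ q, d P ≤ d (a q) := by
  by_cases hmax : ∃ Q, ∀ P, d P ≤ d Q
  · obtain ⟨Q, hQ⟩ := hmax
    exact ⟨fun _ => Q, fun P => ⟨0, hQ P⟩⟩
  push Not at hmax
  have hchoice : ∀ q : ℚ, ∃ Q, (∃ P, (q : α) < d P) → (q : α) < d Q := fun q => by
    by_cases h : ∃ P, (q : α) < d P
    · exact h.imp fun _ hP _ => hP
    · exact ⟨Classical.arbitrary C, fun h' => absurd h' h⟩
  choose a ha using hchoice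
  refine ⟨a, fun P => ?_⟩
  obtain ⟨P', hP'⟩ := hmax P
  obtain ⟨q, hPq, hqP'⟩ := exists_rat_btwn hP'
  exact ⟨q, (hPq.trans (ha q ⟨P', hqP'⟩)).le⟩

theorem exists_not_eventuallyLE_of_countable {ι : Type*} [Countable ι] (h : ι → ℕ → ℕ) :
    ∃ g : ℕ → ℕ, ∀ i, ¬ g ≤ᶠ[atTop] h i := by
  cases isEmpty_or_nonempty ι
  · exact ⟨0, isEmptyElim⟩
  obtain ⟨e, he⟩ := exists_surjective_nat ι
  refine ⟨fun n => ∑ j ∈ Finset.range (n + 1), h (e j) n + 1, fun i hle => ?_⟩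
  obtain ⟨j, rfl⟩ := he i
  have hlt : ∀ᶠ n in atTop, h (e j) n < ∑ k ∈ Finset.range (n + 1), h (e k) n + 1 :=
    eventually_atTop.2 ⟨j, fun n hn => Nat.lt_succ_of_le <|
      Finset.single_le_sum (f := fun k => h (e k) n) (fun _ _ => Nat.zero_le _)
        (Finset.mem_range.2 (Nat.lt_succ_of_le hn))⟩
  obtain ⟨n, hle_n, hlt_n⟩ := (hle.and hlt).exists
  exact (hle_n.trans_lt hlt_n).false

/-- If the sample complexity functions `m Q` of the learnable classes `Q : C`
are cofinal in `(ℕ → ℕ, ≤ₑₐ)`, then there is no real-valued dimension `d` with a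
bounding function `f` satisfying `m Q k ≤ f (d Q) k` that is monotone in the
dimension under eventual dominance. -/
theorem no_monotone_real_valued_dimension {C : Type*} (m : C → ℕ → ℕ)
    (hcof : ∀ g : ℕ → ℕ, ∃ Q : C, EvDom g (m Q)) :
    ¬ ∃ (d : C → ℝ) (f : ℝ → ℕ → ℕ),
        (∀ (Q : C) (k : ℕ), m Q k ≤ f (d Q) k) ∧
        (∀ Q₁ Q₂ : C, d Q₂ ≤ d Q₁ → EvDom (f (d Q₂)) (f (d Q₁))) := by
  rintro ⟨d, f, hbound, hmono⟩
  have : Nonempty C := ⟨(hcof 0).choose⟩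
  obtain ⟨a, ha⟩ := exists_rat_indexed_cofinal d
  obtain ⟨g, hg⟩ := exists_not_eventuallyLE_of_countable fun q => f (d (a q))
  obtain ⟨Q, hgQ⟩ := hcof g
  obtain ⟨q, hq⟩ := ha Q
  refine hg q ?_
  calc g ≤ᶠ[atTop] m Q := evDom_iff_eventuallyLE.1 hgQ
    _ ≤ᶠ[atTop] f (d Q) := Eventually.of_forall (hbound Q)
    _ ≤ᶠ[atTop] f (d (a q)) := evDom_iff_eventuallyLE.1 (hmono _ _ hq)
end

section
/- Let η ∈ (0,1), n ∈ ℕ, and let Q = {(1−η)δ₀ + η·U_A : A ⊆ {1,…,4n}} be a class of distributions over ℕ, where δ₀ is the point mass at 0 and U_A is uniform on A. Then for any (possibly randomized) learner A : ℕ^n → Δ(ℕ), there exists q ∈ Q with E_{S ~ q^n}[TV(q, A(S))] ≥ η/4. -/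
open MeasureTheory Filter

/-- Total variation distance between two distributions over `ℕ`. -/
noncomputable def tv (p q : PMF ℕ) : ℝ :=
  ⨆ A : Set ℕ, |(p.toMeasure A).toReal - (q.toMeasure A).toReal|

/-- The distribution of an i.i.d. sample of size `m` drawn from `q`. -/
noncomputable def iidSample {α : Type*} [MeasurableSpace α] (q : PMF α) (m : ℕ) :
    Measure (Fin m → α) :=
  Measure.pi fun _ => q.toMeasure

/-- The mixture `(1 - η) δ₀ + η U_A` of the point mass at `0` and the uniform
distribution on the finite set `A` (junk values when `η ∉ [0,1]` or `A = ∅`). -/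
noncomputable def mixPMF (η : ℝ) (A : Finset ℕ) : PMF ℕ :=
  (PMF.bernoulli (min (Real.toNNReal η) 1) (min_le_right _ _)).bind fun b =>
    if h : b = true ∧ A.Nonempty then PMF.uniformOfFinset A h.2 else PMF.pure 0

/-- Realizable PAC learnability of a class of distributions over `ℕ` in total
variation distance, witnessed by the learner `A` and sample complexity `mQ`. -/
def RealizablePAC (Q : Set (PMF ℕ)) (A : ∀ m : ℕ, (Fin m → ℕ) → PMF ℕ)
    (mQ : ℝ → ℝ → ℕ) : Prop :=
  ∀ ε δ : ℝ, 0 < ε → ε < 1 → 0 < δ → δ < 1 → ∀ q ∈ Q, ∀ m ≥ mQ ε δ,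
    (iidSample q m) {S | ε < tv (A m S) q} ≤ ENNReal.ofReal δ

/-- 3-agnostic PAC learnability of a class of distributions over `ℕ` in total
variation distance, witnessed by the learner `A` and sample complexity `mQ`. -/
def Agnostic3PAC (Q : Set (PMF ℕ)) (A : ∀ m : ℕ, (Fin m → ℕ) → PMF ℕ)
    (mQ : ℝ → ℝ → ℕ) : Prop :=
  ∀ ε δ : ℝ, 0 < ε → 0 < δ → δ < 1 → ∀ P : PMF ℕ, ∀ m ≥ mQ ε δ,
    ENNReal.ofReal (1 - δ) ≤
      (iidSample P m) {S | tv (A m S) P ≤ 3 * (⨅ q : Q, tv q.1 P) + ε}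

open Finset

/-!
Put the uniform prior on the `2n`-subsets `B` of `I = {1,…,4n}`. Since `mixPMF η B` gives every
point of `B` the same mass `η/(2n)`, the likelihood of a sample `S` is a constant depending only on
`S` times `[V ⊆ B]`, where `V` is the set of nonzero sample points, `#V ≤ n`; so given `S` the
posterior is uniform over the `2n`-sets containing `V`. Among these, the sets containing a fixed
`i ∈ I \ V` and those avoiding it are in the ratio `(2n - #V) : 2n`, so each kind makes up at least a
third. Hence for any guess `p`, on average over the posterior `|q_B(i) - p(i)| ≥ η/(6n)` for each of
the at least `3n` points `i ∈ I \ V`, and the total variation distance, half the `ℓ¹` distance, is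
at least `η/4`. Averaging over `S` and the prior yields one `B` that is learned this badly.
-/

lemma hasSum_integral_countable {X E : Type*} [MeasurableSpace X] [Countable X]
    [MeasurableSingletonClass X] [NormedAddCommGroup E] [NormedSpace ℝ E] [CompleteSpace E]
    {μ : Measure X} {f : X → E} (hf : Integrable f μ) :
    HasSum (fun x => μ.real {x} • f x) (∫ x, f x ∂μ) := by
  rw [← Measure.sum_smul_dirac μ] at hf ⊢
  convert hasSum_integral_measure hf using 2 with x
  rw [integral_smul_measure, integral_dirac, Measure.sum_smul_dirac, measureReal_def]

theorem exists_le_integral_of_forall_le_sum {ι Ω : Type*} [MeasurableSpace Ω] [Countable Ω]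
    [MeasurableSingletonClass Ω] {s : Finset ι} (hs : s.Nonempty) (μ : ι → Measure Ω)
    [∀ i, IsProbabilityMeasure (μ i)] {f : ι → Ω → ℝ} (hf : ∀ i ∈ s, Integrable (f i) (μ i))
    {a : ℝ} (h : ∀ ω, a * ∑ i ∈ s, (μ i).real {ω} ≤ ∑ i ∈ s, (μ i).real {ω} * f i ω) :
    ∃ i ∈ s, a ≤ ∫ ω, f i ω ∂μ i := by
  have hμ : HasSum (fun ω => a * ∑ i ∈ s, (μ i).real {ω}) (∑ _i ∈ s, a) := by
    simpa [mul_sum, mul_comm] using (hasSum_sum (s := s) fun i _ =>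
      hasSum_integral_countable (integrable_const (1 : ℝ) (μ := μ i))).mul_left a
  have hf : HasSum (fun ω => ∑ i ∈ s, (μ i).real {ω} * f i ω) (∑ i ∈ s, ∫ ω, f i ω ∂μ i) :=
    hasSum_sum fun i hi => hasSum_integral_countable (hf i hi)
  exact exists_le_of_sum_le hs (hasSum_le h hμ hf)

theorem card_filter_notMem_mul_eq {α : Type*} [DecidableEq α] {I V : Finset α} {i : α}
    {k : ℕ} (hVI : V ⊆ I) (hi : i ∈ I \ V) (hk : #V < k) :
    #{B ∈ {B ∈ I.powersetCard k | V ⊆ B} | i ∉ B} * (k - #V) =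
      #{B ∈ {B ∈ I.powersetCard k | V ⊆ B} | i ∈ B} * (#I - k) := by
  obtain ⟨hiI, hiV⟩ := mem_sdiff.1 hi
  have hin : {B ∈ {B ∈ I.powersetCard k | V ⊆ B} | i ∈ B} =
      {B ∈ I.powersetCard k | insert i V ⊆ B} := by
    ext B; simp only [mem_filter, mem_powersetCard, insert_subset_iff]; tauto
  have hout : {B ∈ {B ∈ I.powersetCard k | V ⊆ B} | i ∉ B} =
      {B ∈ (I.erase i).powersetCard k | V ⊆ B} := by
    ext B; simp [subset_erase, and_assoc, and_comm]
  rw [hin, hout, card_filter_powersetCard_subset _ _ _ (subset_erase.2 ⟨hVI, hiV⟩) hk.le,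
    card_filter_powersetCard_subset _ _ _ (insert_subset hiI hVI) (by simp [hiV]; omega),
    card_erase_of_mem hiI, card_insert_of_notMem hiV]
  have hVI' : #V < #I := card_lt_card (ssubset_of_subset_of_ne hVI (by rintro rfl; exact hiV hiI))
  obtain ⟨r, hr⟩ : ∃ r, k - #V = r + 1 := ⟨k - #V - 1, by omega⟩
  have := Nat.choose_succ_right_eq (#I - #V - 1) r
  rw [show #I - 1 - #V = #I - #V - 1 by omega, hr, this,
    show k - (#V + 1) = r by omega, show #I - (#V + 1) = #I - #V - 1 by omega,
    show #I - #V - 1 - r = #I - k by omega]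

lemma card_mul_le_three_mul_sum_abs_ite_sub {α : Type*} [DecidableEq α] (ℱ : Finset (Finset α))
    (i : α) {c x : ℝ} (hc : 0 ≤ c) (hx : 0 ≤ x)
    (h₁ : #{B ∈ ℱ | i ∈ B} ≤ #{B ∈ ℱ | i ∉ B}) (h₂ : #{B ∈ ℱ | i ∉ B} ≤ 2 * #{B ∈ ℱ | i ∈ B}) :
    #ℱ * c ≤ 3 * ∑ B ∈ ℱ, |(if i ∈ B then c else 0) - x| := by
  have hin : ∑ B ∈ ℱ with i ∈ B, |(if i ∈ B then c else 0) - x| =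
      #{B ∈ ℱ | i ∈ B} * |c - x| := by
    rw [← nsmul_eq_mul, ← sum_const]
    exact sum_congr rfl fun B hB => by rw [if_pos (mem_filter.1 hB).2]
  have hout : ∑ B ∈ ℱ with i ∉ B, |(if i ∈ B then c else 0) - x| = #{B ∈ ℱ | i ∉ B} * x := by
    rw [← nsmul_eq_mul, ← sum_const]
    exact sum_congr rfl fun B hB => by
      rw [if_neg (mem_filter.1 hB).2, zero_sub, abs_neg, abs_of_nonneg hx]
  rw [← sum_filter_add_sum_filter_not ℱ (i ∈ ·), hin, hout,
    ← card_filter_add_card_filter_not (s := ℱ) (i ∈ ·)]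
  have h₁' : (#{B ∈ ℱ | i ∈ B} : ℝ) ≤ #{B ∈ ℱ | i ∉ B} := by exact_mod_cast h₁
  have h₂' : (#{B ∈ ℱ | i ∉ B} : ℝ) ≤ 2 * #{B ∈ ℱ | i ∈ B} := by exact_mod_cast h₂
  have habs : c - x ≤ |c - x| := le_abs_self _
  push_cast
  nlinarith [mul_le_mul_of_nonneg_left habs (Nat.cast_nonneg (α := ℝ) #{B ∈ ℱ | i ∈ B}),
    mul_le_mul_of_nonneg_right h₁' hx, mul_le_mul_of_nonneg_right h₂' hc]

lemma abs_toMeasure_sub_toMeasure_le_one (p q : PMF ℕ) (A : Set ℕ) :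
    |(p.toMeasure A).toReal - (q.toMeasure A).toReal| ≤ 1 := by
  have hp : p.toMeasure.real A ≤ 1 := measureReal_le_one
  have hq : q.toMeasure.real A ≤ 1 := measureReal_le_one
  rw [measureReal_def] at hp hq
  exact abs_sub_le_iff.2 ⟨by linarith [ENNReal.toReal_nonneg (a := q.toMeasure A)],
    by linarith [ENNReal.toReal_nonneg (a := p.toMeasure A)]⟩

lemma tv_bddAbove (p q : PMF ℕ) :
    BddAbove (Set.range fun A : Set ℕ => |(p.toMeasure A).toReal - (q.toMeasure A).toReal|) :=
  ⟨1, by rintro _ ⟨A, rfl⟩; exact abs_toMeasure_sub_toMeasure_le_one p q A⟩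

lemma tv_nonneg (p q : PMF ℕ) : 0 ≤ tv p q :=
  (abs_nonneg _).trans (le_ciSup (tv_bddAbove p q) ∅)

lemma tv_le_one (p q : PMF ℕ) : tv p q ≤ 1 :=
  ciSup_le (abs_toMeasure_sub_toMeasure_le_one p q)

lemma abs_sum_sub_le_tv (p q : PMF ℕ) (F : Finset ℕ) :
    |∑ i ∈ F, ((p i).toReal - (q i).toReal)| ≤ tv p q := by
  have hsum (r : PMF ℕ) : (r.toMeasure F).toReal = ∑ i ∈ F, (r i).toReal := by
    rw [PMF.toMeasure_apply_finset, ENNReal.toReal_sum fun i _ => r.apply_ne_top i]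
  rw [sum_sub_distrib, ← hsum, ← hsum]
  exact le_ciSup (tv_bddAbove p q) (F : Set ℕ)

lemma sum_abs_sub_le_two_mul_tv (p q : PMF ℕ) (W : Finset ℕ) :
    ∑ i ∈ W, |(p i).toReal - (q i).toReal| ≤ 2 * tv p q := by
  rw [← sum_filter_add_sum_filter_not W fun i => (q i).toReal ≤ (p i).toReal]
  have h₁ : ∑ i ∈ W with (q i).toReal ≤ (p i).toReal, |(p i).toReal - (q i).toReal|
      ≤ tv p q := by
    rw [sum_congr rfl fun i hi => abs_of_nonneg (sub_nonneg.2 (mem_filter.1 hi).2)]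
    exact (le_abs_self _).trans (abs_sum_sub_le_tv p q _)
  have h₂ : ∑ i ∈ W with ¬(q i).toReal ≤ (p i).toReal, |(p i).toReal - (q i).toReal|
      ≤ tv p q := by
    rw [sum_congr rfl fun i hi => abs_of_nonpos (sub_nonpos.2 (not_le.1 (mem_filter.1 hi).2).le),
      sum_neg_distrib]
    exact (neg_le_abs _).trans (abs_sum_sub_le_tv p q _)
  linarith

instance {α : Type*} [MeasurableSpace α] (q : PMF α) (m : ℕ) :
    IsProbabilityMeasure (iidSample q m) := by
  unfold iidSample; infer_instance

lemma iidSample_real_singleton {α : Type*} [MeasurableSpace α] [MeasurableSingletonClass α]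
    (q : PMF α) (n : ℕ) (S : Fin n → α) :
    (iidSample q n).real {S} = ∏ j, (q (S j)).toReal := by
  rw [measureReal_def, iidSample, ← Set.univ_pi_singleton, Measure.pi_pi, ENNReal.toReal_prod]
  simp [PMF.toMeasure_apply_singleton _ _ (measurableSet_singleton _)]

lemma mixPMF_apply_toReal {η : ℝ} (hη0 : 0 ≤ η) (hη1 : η ≤ 1) {B : Finset ℕ}
    (hB : B.Nonempty) (x : ℕ) :
    (mixPMF η B x).toReal = (if x = 0 then 1 - η else 0) + (if x ∈ B then η / #B else 0) := by
  rw [mixPMF, PMF.bind_apply, tsum_bool]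
  simp [hB, PMF.bernoulli_apply, PMF.uniformOfFinset_apply, PMF.pure_apply,
    min_eq_left (Real.toNNReal_le_one.2 hη1)]
  split_ifs <;> simp [ENNReal.toReal_add, ENNReal.mul_ne_top, ENNReal.toReal_sub_of_le, hη0, hη1,
    hB.card_ne_zero, div_eq_mul_inv]

lemma iidSample_mixPMF_real_singleton {η : ℝ} (hη0 : 0 ≤ η) (hη1 : η ≤ 1) {B : Finset ℕ}
    (hB : B.Nonempty) (h0B : 0 ∉ B) {n : ℕ} (S : Fin n → ℕ) :
    (iidSample (mixPMF η B) n).real {S} =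
      if (univ.image S).erase 0 ⊆ B then ∏ j, (if S j = 0 then 1 - η else η / #B) else 0 := by
  rw [iidSample_real_singleton]
  split_ifs with hSB
  · refine prod_congr rfl fun j _ => ?_
    by_cases hj : S j = 0
    · simp [mixPMF_apply_toReal hη0 hη1 hB, hj, h0B]
    · simp [mixPMF_apply_toReal hη0 hη1 hB, hj,
        hSB (mem_erase.2 ⟨hj, mem_image_of_mem S (mem_univ j)⟩)]
  · obtain ⟨x, hxS, hxB⟩ := not_subset.1 hSB
    obtain ⟨hx0, j, -, rfl⟩ := by simpa using hxS
    exact prod_eq_zero (mem_univ j) (by simp [mixPMF_apply_toReal hη0 hη1 hB, hx0, hxB])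

lemma mul_card_le_sum_tv_mixPMF {η : ℝ} (hη0 : 0 ≤ η) (hη1 : η ≤ 1) {n : ℕ} (hn : 0 < n)
    (p : PMF ℕ) {V : Finset ℕ} (hVI : V ⊆ Icc 1 (4 * n)) (hV : #V ≤ n) :
    η / 4 * #{B ∈ (Icc 1 (4 * n)).powersetCard (2 * n) | V ⊆ B} ≤
      ∑ B ∈ (Icc 1 (4 * n)).powersetCard (2 * n) with V ⊆ B, tv (mixPMF η B) p := by
  set I := Icc 1 (4 * n)
  set ℱ := {B ∈ I.powersetCard (2 * n) | V ⊆ B}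
  have hI : #I = 4 * n := by simp [I]
  have hval : ∀ B ∈ ℱ, ∀ i ∈ I \ V,
      (mixPMF η B i).toReal = if i ∈ B then η / (2 * n : ℕ) else 0 := by
    intro B hB i hi
    have hBc := (mem_powersetCard.1 (mem_filter.1 hB).1).2
    have hi0 : i ≠ 0 := by have := (mem_Icc.1 (mem_sdiff.1 hi).1).1; omega
    rw [mixPMF_apply_toReal hη0 hη1 (card_pos.1 (by omega)) i, if_neg hi0, zero_add, hBc]
  have hcoord : ∀ i ∈ I \ V, #ℱ * (η / (2 * n : ℕ)) ≤
      3 * ∑ B ∈ ℱ, |(mixPMF η B i).toReal - (p i).toReal| := by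
    intro i hi
    have hcount := card_filter_notMem_mul_eq hVI hi (k := 2 * n) (by omega)
    rw [hI, show 4 * n - 2 * n = 2 * n by omega] at hcount
    rw [sum_congr rfl fun B hB => by rw [hval B hB i hi]]
    refine card_mul_le_three_mul_sum_abs_ite_sub ℱ i (by positivity) ENNReal.toReal_nonneg ?_ ?_
    · refine Nat.le_of_mul_le_mul_right (c := 2 * n) ?_ (by omega)
      rw [← hcount]
      exact Nat.mul_le_mul_left _ (Nat.sub_le _ _)
    · refine Nat.le_of_mul_le_mul_right (c := n) ?_ hn
      calc _ ≤ #{B ∈ ℱ | i ∉ B} * (2 * n - #V) := Nat.mul_le_mul_left _ (by omega)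
        _ = 2 * #{B ∈ ℱ | i ∈ B} * n := by rw [hcount]; ring
  have hW : 3 * n ≤ #(I \ V) := by rw [card_sdiff_of_subset hVI, hI]; omega
  have hn' : (n : ℝ) ≠ 0 := by positivity
  calc η / 4 * #ℱ = ((3 * n : ℕ) * (#ℱ * (η / (2 * n : ℕ)))) / 6 := by
        push_cast; field_simp; ring
    _ ≤ (#(I \ V) * (#ℱ * (η / (2 * n : ℕ)))) / 6 := by gcongr
    _ ≤ (∑ i ∈ I \ V, 3 * ∑ B ∈ ℱ, |(mixPMF η B i).toReal - (p i).toReal|) / 6 := by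
        gcongr
        rw [← nsmul_eq_mul, ← sum_const]
        exact sum_le_sum hcoord
    _ = (∑ B ∈ ℱ, ∑ i ∈ I \ V, |(mixPMF η B i).toReal - (p i).toReal|) / 2 := by
        rw [← mul_sum, sum_comm]; ring
    _ ≤ ∑ B ∈ ℱ, tv (mixPMF η B) p := by
        rw [div_le_iff₀ (by norm_num), sum_mul]
        exact sum_le_sum fun B _ => by linarith [sum_abs_sub_le_two_mul_tv (mixPMF η B) p (I \ V)]

lemma mul_sum_iidSample_le_sum_mul_tv {η : ℝ} (hη0 : 0 ≤ η) (hη1 : η ≤ 1) {n : ℕ} (hn : 0 < n)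
    (p : PMF ℕ) (S : Fin n → ℕ) :
    η / 4 * ∑ B ∈ (Icc 1 (4 * n)).powersetCard (2 * n), (iidSample (mixPMF η B) n).real {S} ≤
      ∑ B ∈ (Icc 1 (4 * n)).powersetCard (2 * n),
        (iidSample (mixPMF η B) n).real {S} * tv (mixPMF η B) p := by
  set I := Icc 1 (4 * n)
  set V := (univ.image S).erase 0
  set c := ∏ j, (if S j = 0 then 1 - η else η / (2 * n : ℕ))
  have hlik : ∀ B ∈ I.powersetCard (2 * n),
      (iidSample (mixPMF η B) n).real {S} = if V ⊆ B then c else 0 := by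
    intro B hB
    obtain ⟨hBI, hBc⟩ := mem_powersetCard.1 hB
    have h0B : 0 ∉ B := fun h => by simpa [I] using hBI h
    rw [iidSample_mixPMF_real_singleton hη0 hη1 (card_pos.1 (by omega)) h0B, hBc]
  rw [sum_congr rfl hlik, sum_congr rfl fun B hB => congrArg (· * tv (mixPMF η B) p) (hlik B hB)]
  simp only [ite_mul, zero_mul, ← sum_filter, sum_const, nsmul_eq_mul, ← mul_sum]
  have hc : 0 ≤ c := prod_nonneg fun j _ => by split_ifs <;> positivity
  by_cases hVI : V ⊆ I
  · have hV : #V ≤ n := (card_erase_le.trans card_image_le).trans (by simp)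
    have := mul_card_le_sum_tv_mixPMF hη0 hη1 hn p hVI hV
    calc η / 4 * (#{B ∈ I.powersetCard (2 * n) | V ⊆ B} * c)
        = c * (η / 4 * #{B ∈ I.powersetCard (2 * n) | V ⊆ B}) := by ring
      _ ≤ _ := mul_le_mul_of_nonneg_left this hc
  · have hempty : {B ∈ I.powersetCard (2 * n) | V ⊆ B} = ∅ :=
      filter_eq_empty_iff.2 fun B hB hVB => hVI (hVB.trans (mem_powersetCard.1 hB).1)
    simp [hempty]

/-- No-free-lunch lower bound for distribution learning: for the class
`{(1-η)δ₀ + η U_A : A ⊆ {1,…,4n}}`, every learner using samples of size `n`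
has expected TV-error at least `η/4` against some member of the class. -/
theorem no_free_lunch_distribution_learning (η : ℝ) (hη0 : 0 < η) (hη1 : η < 1)
    (n : ℕ) (hn : 0 < n) (A : (Fin n → ℕ) → PMF ℕ) :
    ∃ q : PMF ℕ,
      (∃ B : Finset ℕ, B.Nonempty ∧ ↑B ⊆ Finset.Icc 1 (4 * n) ∧ q = mixPMF η B) ∧
      η / 4 ≤ ∫ S, tv q (A S) ∂(iidSample q n) := by
  have hℬ : ((Icc 1 (4 * n)).powersetCard (2 * n)).Nonempty :=
    powersetCard_nonempty.2 (by rw [Nat.card_Icc]; omega)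
  have hint (B : Finset ℕ) :
      Integrable (fun S => tv (mixPMF η B) (A S)) (iidSample (mixPMF η B) n) :=
    .of_bound (measurable_of_countable _).aestronglyMeasurable 1 (ae_of_all _ fun S => by
      rw [Real.norm_of_nonneg (tv_nonneg _ _)]; exact tv_le_one _ _)
  obtain ⟨B, hB, hle⟩ := exists_le_integral_of_forall_le_sum hℬ (fun B => iidSample (mixPMF η B) n)
    (fun B _ => hint B) fun S => mul_sum_iidSample_le_sum_mul_tv hη0.le hη1.le hn (A S) S
  obtain ⟨hBI, hBc⟩ := mem_powersetCard.1 hB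
  exact ⟨_, ⟨B, card_pos.1 (by omega), by exact_mod_cast hBI, rfl⟩, hle⟩
end
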